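/- arXiv:2209.02873 — 5 statements merged into one kernel-verified Lean document; each statement's English description precedes it below -/
import Mathlib

section
/- Let N ≥ 2 and let A, B, C ∈ ℂ satisfy A ≠ 0, C ≠ 0 and B² − 4AC ≠ 0. Suppose β_0, β_1, …, β_N ∈ ℂ are not all zero, β_0 = β_N = 0, and C β_{j−1} + B β_j + A β_{j+1} = 0 for all j = 1,…,N−1. Then there exists k ∈ {1,…,N−1} such that B² = 4AC·cos²(kπ/N). -/
/-!
Writing `B = -A (r + s)` and `C = A r s` with distinct roots `r ≠ s` of `A x² + B x + C`,
the boundary condition `β₀ = 0` forces `(r - s) β_j = β₁ (r^j - s^j)`. As `β` is not identically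
zero, `β₁ ≠ 0`, so `β_N = 0` gives `r^N = s^N`. Hence `r = e^{2πik/N} s` with `0 < k < N`, and then
`r + s = 2 e^{iπk/N} cos(kπ/N) s`; squaring gives `B² = 4AC cos²(kπ/N)`.
-/

open Complex

theorem exists_vieta_of_discrim_ne_zero {K : Type*} [Field K] [IsAlgClosed K] [NeZero (2 : K)]
    {A B C : K} (hA : A ≠ 0) (hdisc : B ^ 2 - 4 * A * C ≠ 0) :
    ∃ r s : K, r ≠ s ∧ B = -A * (r + s) ∧ C = A * r * s := by
  obtain ⟨D, hD⟩ := IsAlgClosed.exists_pow_nat_eq (B ^ 2 - 4 * A * C) two_pos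
  have hD0 : D ≠ 0 := by rintro rfl; exact hdisc (by simpa using hD.symm)
  have h2 : (2 : K) ≠ 0 := two_ne_zero
  refine ⟨(-B + D) / (2 * A), (-B - D) / (2 * A), ?_, ?_, ?_⟩
  · rw [Ne, div_left_inj' (mul_ne_zero h2 hA)]
    intro h
    have h2D : 2 * D = 0 := by linear_combination h
    exact hD0 ((mul_eq_zero.mp h2D).resolve_left h2)
  · field_simp
    ring
  · field_simp
    linear_combination hD

theorem sub_mul_eq_of_linear_recurrence {R : Type*} [CommRing R] {r s : R} {β : ℕ → R} {N : ℕ}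
    (h0 : β 0 = 0)
    (hrec : ∀ j, j + 2 ≤ N → β (j + 2) = (r + s) * β (j + 1) - r * s * β j) :
    ∀ j ≤ N, (r - s) * β j = β 1 * (r ^ j - s ^ j) := by
  intro j
  induction j using Nat.twoStepInduction with
  | zero => simp [h0]
  | one => intro; ring
  | more j ih₀ ih₁ =>
    intro hj
    rw [hrec j hj]
    linear_combination (r + s) * ih₁ (by omega) - r * s * ih₀ (by omega)

theorem pow_eq_pow_of_linear_recurrence {R : Type*} [CommRing R] [IsDomain R] {r s : R}
    {β : ℕ → R} {N : ℕ} (hrs : r ≠ s) (hne : ∃ j ≤ N, β j ≠ 0) (h0 : β 0 = 0) (hN : β N = 0)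
    (hrec : ∀ j, j + 2 ≤ N → β (j + 2) = (r + s) * β (j + 1) - r * s * β j) :
    r ^ N = s ^ N := by
  have hformula := sub_mul_eq_of_linear_recurrence h0 hrec
  have hrs' : r - s ≠ 0 := sub_ne_zero.mpr hrs
  have hβ1 : β 1 ≠ 0 := by
    obtain ⟨j, hj, hβj⟩ := hne
    intro h
    exact hβj (by simpa [h, hrs'] using hformula j hj)
  have := hformula N le_rfl
  rw [hN, mul_zero, eq_comm, mul_eq_zero, sub_eq_zero] at this
  exact this.resolve_left hβ1

theorem exists_eq_exp_mul_of_pow_eq_pow {r s : ℂ} {N : ℕ} (hN : N ≠ 0) (hrs : r ≠ s)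
    (hs : s ≠ 0) (h : r ^ N = s ^ N) :
    ∃ k : ℕ, 1 ≤ k ∧ k ≤ N - 1 ∧ r = exp (2 * ↑(k * Real.pi / N : ℝ) * I) * s := by
  have := NeZero.mk hN
  have hζ : (r / s) ^ N = 1 := by rw [div_pow, h, div_self (pow_ne_zero _ hs)]
  obtain ⟨k, hkN, hk⟩ := (isPrimitiveRoot_exp N hN).eq_pow_of_pow_eq_one hζ
  have hk0 : k ≠ 0 := by
    rintro rfl
    exact hrs ((div_eq_one_iff_eq hs).mp hk.symm)
  refine ⟨k, by omega, by omega, ?_⟩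
  rw [(div_eq_iff hs).mp hk.symm, ← exp_nat_mul]
  push_cast
  ring_nf

theorem exp_two_mul_I_add_one (θ : ℂ) : exp (2 * θ * I) + 1 = 2 * exp (θ * I) * cos θ := by
  rw [show 2 * exp (θ * I) * cos θ = exp (θ * I) * (2 * cos θ) by ring, two_cos, mul_add,
    ← exp_add, ← exp_add, neg_mul, add_neg_cancel, exp_zero, ← two_mul, mul_assoc]

theorem exp_two_mul_I_mul_add_self_sq (θ s : ℂ) :
    (exp (2 * θ * I) * s + s) ^ 2 = 4 * (exp (2 * θ * I) * s) * s * cos θ ^ 2 := by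
  have hsq : exp (2 * θ * I) = exp (θ * I) ^ 2 := by rw [← exp_nat_mul]; push_cast; ring_nf
  linear_combination s ^ 2 * (exp (2 * θ * I) + 1 + 2 * exp (θ * I) * cos θ) *
    exp_two_mul_I_add_one θ - 4 * s ^ 2 * cos θ ^ 2 * hsq

/-- Let `N ≥ 2` and `A, B, C ∈ ℂ` with `A ≠ 0`, `C ≠ 0` and `B² - 4AC ≠ 0`.  If
`β_0, …, β_N` are not all zero, `β_0 = β_N = 0` and
`C β_{j-1} + B β_j + A β_{j+1} = 0` for `j = 1, …, N-1`, then
`B² = 4AC cos²(kπ/N)` for some `k ∈ {1, …, N-1}`. -/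
theorem stmt7 (N : ℕ) (hN : 2 ≤ N) (A B C : ℂ) (hA : A ≠ 0) (hC : C ≠ 0)
    (hdisc : B ^ 2 - 4 * A * C ≠ 0) (β : ℕ → ℂ)
    (hne : ∃ j ≤ N, β j ≠ 0) (hb0 : β 0 = 0) (hbN : β N = 0)
    (hrec : ∀ j, 1 ≤ j → j ≤ N - 1 →
      C * β (j - 1) + B * β j + A * β (j + 1) = 0) :
    ∃ k, 1 ≤ k ∧ k ≤ N - 1 ∧
      B ^ 2 = 4 * A * C * ((Real.cos (k * Real.pi / N) : ℝ) : ℂ) ^ 2 := by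
  obtain ⟨r, s, hrs, rfl, rfl⟩ := exists_vieta_of_discrim_ne_zero hA hdisc
  have hs : s ≠ 0 := by rintro rfl; simp at hC
  have hmonic : ∀ j, j + 2 ≤ N → β (j + 2) = (r + s) * β (j + 1) - r * s * β j := by
    intro j hj
    have := hrec (j + 1) (by omega) (by omega)
    rw [Nat.add_sub_cancel] at this
    apply mul_left_cancel₀ hA
    linear_combination this
  obtain ⟨k, hk1, hkN, hr⟩ := exists_eq_exp_mul_of_pow_eq_pow (by omega) hrs hs
    (pow_eq_pow_of_linear_recurrence hrs hne hb0 hbN hmonic)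
  refine ⟨k, hk1, hkN, ?_⟩
  rw [hr, ofReal_cos]
  linear_combination A ^ 2 * exp_two_mul_I_mul_add_self_sq _ s
end

section
/- The matrix X₁ is invertible, and for every eigenvalue λ ∈ ℂ of W₁ = X₁⁻¹Y₁ there exists φ, with either φ = 1 or φ = cos²(kπ/N) for some k ∈ {1,…,N−1}, such that (y₂ − λc₂)² = 4φ·(y₁ − λc₁)(y₃ − λc₃). -/
/-!
A kernel vector of the tridiagonal Toeplitz matrix with entries `(a, b, c)`, padded by zeros,
is a nonzero solution of `a wⱼ + b wⱼ₊₁ + c wⱼ₊₂ = 0` with `w₀ = w_N = 0`. Unless `b² = 4ac`, the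
characteristic roots `r₁ ≠ r₂` give `wₖ ∝ r₁ᵏ - r₂ᵏ`, so `r₁/r₂` is an `N`-th root of unity
`e^{2ikπ/N} ≠ 1` and `b²/(ac) = (r₁ + r₂)²/(r₁r₂) = 4 cos²(kπ/N)`. For `X₁` this is impossible,
since `4 c₁ c₃ = (4 - δz²)/(144 δv²) < 25/(36 δv²) = c₂²`, so `X₁` is invertible; and an eigenvector
of `X₁⁻¹ Y₁` for `λ` is a kernel vector of the tridiagonal Toeplitz matrix `Y₁ - λ X₁`.
-/

/-- The `(N-1)×(N-1)` tridiagonal complex matrix with 1-indexed subdiagonal entries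
`sub_{i+1}` (at position `(i+1, i)`), diagonal entries `dia_i` and superdiagonal
entries `sup_i` (at position `(i, i+1)`), built from real data. -/
def triMatC (n : ℕ) (sub dia sup : ℕ → ℝ) : Matrix (Fin n) (Fin n) ℂ :=
  Matrix.of fun i j =>
    if i.val = j.val then (dia (i.val + 1) : ℂ)
    else if i.val + 1 = j.val then (sup (i.val + 1) : ℂ)
    else if j.val + 1 = i.val then (sub (i.val + 1) : ℂ)
    else 0

/-- `μ` is an eigenvalue of the square complex matrix `M` if `M v = μ v` for some
nonzero vector `v`. -/
def IsEig {n : ℕ} (M : Matrix (Fin n) (Fin n) ℂ) (μ : ℂ) : Prop :=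
  ∃ v : Fin n → ℂ, v ≠ 0 ∧ M.mulVec v = μ • v

/-- `c₁ = (2 + δz)/(24 δv)`. -/
noncomputable def cc1 (δv δz : ℝ) : ℝ := (2 + δz) / (24 * δv)

/-- `c₂ = 5/(6 δv)`. -/
noncomputable def cc2 (δv : ℝ) : ℝ := 5 / (6 * δv)

/-- `c₃ = (2 - δz)/(24 δv)`. -/
noncomputable def cc3 (δv δz : ℝ) : ℝ := (2 - δz) / (24 * δv)

/-- `y₁ = -c/(2δz) - (c + c δz²/12)/δz²`. -/
noncomputable def yy1 (c δz : ℝ) : ℝ := -c / (2 * δz) - (c + c * δz ^ 2 / 12) / δz ^ 2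

/-- `y₂ = 2 (c + c δz²/12)/δz²`. -/
noncomputable def yy2 (c δz : ℝ) : ℝ := 2 * (c + c * δz ^ 2 / 12) / δz ^ 2

/-- `y₃ = c/(2δz) - (c + c δz²/12)/δz²`. -/
noncomputable def yy3 (c δz : ℝ) : ℝ := c / (2 * δz) - (c + c * δz ^ 2 / 12) / δz ^ 2

/-- The `(N-1)×(N-1)` tridiagonal Toeplitz matrix `X₁` with subdiagonal `c₁`,
diagonal `c₂` and superdiagonal `c₃`. -/
noncomputable def X1mat (δv δz : ℝ) (N : ℕ) : Matrix (Fin (N - 1)) (Fin (N - 1)) ℂ :=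
  triMatC (N - 1) (fun _ => cc1 δv δz) (fun _ => cc2 δv) (fun _ => cc3 δv δz)

/-- The `(N-1)×(N-1)` tridiagonal Toeplitz matrix `Y₁` with subdiagonal `y₁`,
diagonal `y₂` and superdiagonal `y₃`. -/
noncomputable def Y1mat (c δz : ℝ) (N : ℕ) : Matrix (Fin (N - 1)) (Fin (N - 1)) ℂ :=
  triMatC (N - 1) (fun _ => yy1 c δz) (fun _ => yy2 c δz) (fun _ => yy3 c δz)

section Recurrence

variable {R : Type*} [CommRing R]

theorem eq_zero_of_first_order_recurrence [IsDomain R] {a b : R} (hb : b ≠ 0) {N : ℕ}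
    {w : ℕ → R} (h0 : w 0 = 0) (hrec : ∀ j, j + 2 ≤ N → a * w j + b * w (j + 1) = 0) :
    ∀ k, k < N → w k = 0 := by
  intro k
  induction k with
  | zero => exact fun _ => h0
  | succ j ih =>
    intro hj
    have h := hrec j (by omega)
    rw [ih (by omega), mul_zero, zero_add] at h
    exact (mul_eq_zero.mp h).resolve_left hb

/-- The division-free form of `w k = w 1 (r₁ᵏ - r₂ᵏ)/(r₁ - r₂)`. -/
theorem sub_mul_eq_of_second_order_recurrence {r₁ r₂ : R} {N : ℕ} {w : ℕ → R} (h0 : w 0 = 0)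
    (hrec : ∀ j, j + 2 ≤ N → w (j + 2) = (r₁ + r₂) * w (j + 1) - r₁ * r₂ * w j) :
    ∀ k, k ≤ N → (r₁ - r₂) * w k = w 1 * (r₁ ^ k - r₂ ^ k) := by
  intro k
  induction k using Nat.twoStepInduction with
  | zero => intro; simp [h0]
  | one => intro; ring
  | more j ih₀ ih₁ =>
    intro hj
    rw [hrec j hj]
    linear_combination (r₁ + r₂) * ih₁ (by omega) - r₁ * r₂ * ih₀ (by omega)

end Recurrence

theorem exists_roots_of_quadratic {K : Type*} [Field K] [IsAlgClosed K] [NeZero (2 : K)]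
    {a b c : K} (hc : c ≠ 0) : ∃ r₁ r₂ : K, a = c * (r₁ * r₂) ∧ b = -c * (r₁ + r₂) := by
  obtain ⟨s, hs⟩ := IsAlgClosed.exists_eq_mul_self (discrim c b a)
  rw [discrim] at hs
  refine ⟨(-b + s) / (2 * c), (-b - s) / (2 * c), ?_, ?_⟩
  · field_simp
    linear_combination -hs
  · field_simp
    ring

theorem Complex.exp_two_mul_mul_I_add_one_sq (z : ℂ) :
    (exp (2 * z * I) + 1) ^ 2 = 4 * cos z ^ 2 * exp (2 * z * I) := by
  have h : exp (2 * z * I) = exp (z * I) ^ 2 := by rw [← exp_nat_mul]; ring_nf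
  have hinv : exp (z * I) * exp (-z * I) = 1 := by rw [← exp_add]; simp
  rw [h, cos]
  linear_combination
    -(2 * exp (z * I) ^ 2 + exp (z * I) * exp (-z * I) + 1) * hinv

theorem exists_cos_sq_of_pow_eq_pow {r₁ r₂ : ℂ} {N : ℕ} (hN : N ≠ 0) (hr : r₁ ≠ r₂)
    (hpow : r₁ ^ N = r₂ ^ N) :
    ∃ k, 1 ≤ k ∧ k ≤ N - 1 ∧
      (r₁ + r₂) ^ 2 = 4 * ((Real.cos (k * Real.pi / N) ^ 2 : ℝ) : ℂ) * (r₁ * r₂) := by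
  have hr₂ : r₂ ≠ 0 := by
    rintro rfl
    exact hr (pow_eq_zero_iff hN |>.mp (hpow.trans (zero_pow hN)))
  have hq : (r₁ / r₂) ^ N = 1 := by rw [div_pow, hpow, div_self (pow_ne_zero _ hr₂)]
  have : NeZero N := ⟨hN⟩
  obtain ⟨k, hkN, hk⟩ := (Complex.isPrimitiveRoot_exp N hN).eq_pow_of_pow_eq_one hq
  have hk0 : k ≠ 0 := by
    rintro rfl
    exact hr (by rw [pow_zero, eq_comm, div_eq_one_iff_eq hr₂] at hk; exact hk)
  refine ⟨k, by omega, by omega, ?_⟩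
  have hexp : r₁ / r₂ = Complex.exp (2 * (k * Real.pi / N : ℝ) * Complex.I) := by
    rw [← hk, ← Complex.exp_nat_mul]
    push_cast
    congr 1
    field_simp
  have hr₁ : r₁ = Complex.exp (2 * (k * Real.pi / N : ℝ) * Complex.I) * r₂ := by
    rw [← hexp, div_mul_cancel₀ _ hr₂]
  rw [hr₁]
  push_cast
  linear_combination r₂ ^ 2 * Complex.exp_two_mul_mul_I_add_one_sq (k * Real.pi / N)

/-- `b² = 4φac` with `φ` in this set is necessary for the tridiagonal Toeplitz matrix `(a, b, c)` of
size `N - 1` to be singular. -/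
def singularRatios (N : ℕ) : Set ℝ :=
  insert 1 {φ | ∃ k, 1 ≤ k ∧ k ≤ N - 1 ∧ φ = Real.cos (k * Real.pi / N) ^ 2}

theorem singularRatios_subset_Icc (N : ℕ) : singularRatios N ⊆ Set.Icc 0 1 := by
  rintro φ (rfl | ⟨k, -, -, rfl⟩)
  · exact ⟨zero_le_one, le_rfl⟩
  · exact ⟨sq_nonneg _, Real.cos_sq_le_one _⟩

theorem exists_mem_singularRatios_of_recurrence {a b c : ℂ} {N : ℕ} {w : ℕ → ℂ}
    (h0 : w 0 = 0) (hN : w N = 0)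
    (hrec : ∀ j, j + 2 ≤ N → a * w j + b * w (j + 1) + c * w (j + 2) = 0)
    {k : ℕ} (hkN : k < N) (hk : w k ≠ 0) :
    ∃ φ ∈ singularRatios N, b ^ 2 = 4 * (φ : ℂ) * a * c := by
  by_cases hdisc : b ^ 2 = 4 * a * c
  · exact ⟨1, Set.mem_insert _ _, by rw [hdisc]; push_cast; ring⟩
  obtain hc | hc := eq_or_ne c 0
  · subst hc
    have hb : b ≠ 0 := by rintro rfl; exact hdisc (by ring)
    refine absurd (eq_zero_of_first_order_recurrence (a := a) hb h0 (fun j hj => ?_) k hkN) hk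
    simpa using hrec j hj
  obtain ⟨r₁, r₂, rfl, rfl⟩ := exists_roots_of_quadratic (a := a) (b := b) hc
  have hr : r₁ ≠ r₂ := by rintro rfl; exact hdisc (by ring)
  have hclosed := sub_mul_eq_of_second_order_recurrence (r₁ := r₁) (r₂ := r₂) (N := N) h0
    fun j hj => mul_left_cancel₀ hc (by linear_combination hrec j hj)
  have hw₁ : w 1 ≠ 0 := by
    intro h1
    have := hclosed k hkN.le
    rw [h1, zero_mul] at this
    exact hk ((mul_eq_zero.mp this).resolve_left (sub_ne_zero.mpr hr))
  have hpow : r₁ ^ N = r₂ ^ N := by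
    have := hclosed N le_rfl
    rw [hN, mul_zero, eq_comm] at this
    exact sub_eq_zero.mp ((mul_eq_zero.mp this).resolve_left hw₁)
  obtain ⟨j, hj₁, hjN, hcos⟩ := exists_cos_sq_of_pow_eq_pow (by omega) hr hpow
  exact ⟨_, Set.mem_insert_of_mem _ ⟨j, hj₁, hjN, rfl⟩, by linear_combination c ^ 2 * hcos⟩

section Tridiagonal

variable {R : Type*}

def tridiagToeplitz [Zero R] (n : ℕ) (a b c : R) : Matrix (Fin n) (Fin n) R :=
  Matrix.of fun i j =>
    if i.val = j.val then b
    else if i.val + 1 = j.val then c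
    else if j.val + 1 = i.val then a
    else 0

theorem triMatC_const (n : ℕ) (a b c : ℝ) :
    triMatC n (fun _ => a) (fun _ => b) (fun _ => c) = tridiagToeplitz n (a : ℂ) b c := rfl

theorem tridiagToeplitz_sub_smul [Ring R] (n : ℕ) (a b c a' b' c' μ : R) :
    tridiagToeplitz n a b c - μ • tridiagToeplitz n a' b' c' =
      tridiagToeplitz n (a - μ * a') (b - μ * b') (c - μ * c') := by
  ext i j
  simp only [tridiagToeplitz, Matrix.sub_apply, Matrix.smul_apply, Matrix.of_apply, smul_eq_mul]
  split_ifs <;> simp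

/-- `v` read as the sequence `0, v 0, …, v (n - 1), 0, 0, …`. -/
def padSeq [AddCommMonoid R] {n : ℕ} (v : Fin n → R) (k : ℕ) : R :=
  ∑ x : Fin n, if x.val + 1 = k then v x else 0

section padSeq

variable [AddCommMonoid R] {n : ℕ} (v : Fin n → R)

theorem padSeq_zero : padSeq v 0 = 0 := by simp [padSeq]

theorem padSeq_succ (x : Fin n) : padSeq v (x + 1) = v x := by
  simp [padSeq, ← Fin.ext_iff]

theorem padSeq_of_lt {k : ℕ} (hk : n < k) : padSeq v k = 0 :=
  Finset.sum_eq_zero fun x _ => if_neg (by omega)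

end padSeq

theorem tridiagToeplitz_mulVec_apply [CommRing R] {n : ℕ} (v : Fin n → R) (a b c : R) (i : Fin n) :
    (tridiagToeplitz n a b c).mulVec v i =
      a * padSeq v i + b * padSeq v (i + 1) + c * padSeq v (i + 2) := by
  simp only [padSeq, Matrix.mulVec, dotProduct, Finset.mul_sum, ← Finset.sum_add_distrib]
  refine Finset.sum_congr rfl fun x _ => ?_
  simp only [tridiagToeplitz, Matrix.of_apply]
  split_ifs <;> first | omega | ring

end Tridiagonal

theorem exists_mem_singularRatios_of_mulVec_eq_zero {N : ℕ} {a b c : ℂ}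
    {v : Fin (N - 1) → ℂ} (hv : v ≠ 0) (h : (tridiagToeplitz (N - 1) a b c).mulVec v = 0) :
    ∃ φ ∈ singularRatios N, b ^ 2 = 4 * (φ : ℂ) * a * c := by
  obtain ⟨x, hx⟩ := Function.ne_iff.mp hv
  have hxN := x.isLt
  refine exists_mem_singularRatios_of_recurrence (padSeq_zero v) (padSeq_of_lt v (by omega))
    (fun j hj => ?_) (k := x + 1) (by omega) (by rwa [padSeq_succ])
  simpa [tridiagToeplitz_mulVec_apply] using congrFun h ⟨j, by omega⟩

theorem Matrix.mulVec_sub_smul_eq_zero_of_nonsing_inv_mul {ι K : Type*} [Fintype ι]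
    [DecidableEq ι] [CommRing K] {A B : Matrix ι ι K} (hA : IsUnit A.det) {μ : K} {v : ι → K}
    (h : (A⁻¹ * B).mulVec v = μ • v) : (B - μ • A).mulVec v = 0 := by
  have h' := congrArg A.mulVec h
  rw [mulVec_mulVec, ← Matrix.mul_assoc, mul_nonsing_inv _ hA, Matrix.one_mul, mulVec_smul] at h'
  rw [sub_mulVec, smul_mulVec, h', sub_self]

theorem four_mul_mul_cc1_cc3_lt_cc2_sq {δv δz φ : ℝ} (hδv : δv ≠ 0) (hφ : φ ∈ Set.Icc 0 1) :
    4 * φ * (cc1 δv δz * cc3 δv δz) < cc2 δv ^ 2 := by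
  have hφ' : φ * (4 - δz ^ 2) ≤ 4 := by nlinarith [mul_nonneg hφ.1 (sq_nonneg δz), hφ.2]
  have hpos : 0 < δv ^ 2 := by positivity
  calc 4 * φ * (cc1 δv δz * cc3 δv δz) = φ * (4 - δz ^ 2) / (144 * δv ^ 2) := by
        rw [cc1, cc3]; field_simp; ring
    _ ≤ 4 / (144 * δv ^ 2) := by gcongr
    _ < 25 / (36 * δv ^ 2) := by rw [div_lt_div_iff₀ (by positivity) (by positivity)]; nlinarith
    _ = cc2 δv ^ 2 := by rw [cc2]; field_simp; ring

theorem stmt8_general (c δv δz : ℝ) (hδv : 0 < δv) (N : ℕ) :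
    IsUnit (X1mat δv δz N).det ∧
    ∀ lam : ℂ, IsEig ((X1mat δv δz N)⁻¹ * Y1mat c δz N) lam →
      ∃ φ : ℝ,
        (φ = 1 ∨ ∃ k, 1 ≤ k ∧ k ≤ N - 1 ∧ φ = Real.cos (k * Real.pi / N) ^ 2) ∧
        ((yy2 c δz : ℂ) - lam * (cc2 δv : ℂ)) ^ 2 =
          4 * (φ : ℂ) * ((yy1 c δz : ℂ) - lam * (cc1 δv δz : ℂ)) *
            ((yy3 c δz : ℂ) - lam * (cc3 δv δz : ℂ)) := by
  have hdet : IsUnit (X1mat δv δz N).det := by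
    refine isUnit_iff_ne_zero.mpr fun h0 => ?_
    obtain ⟨v, hv, hXv⟩ := Matrix.exists_mulVec_eq_zero_iff.mpr h0
    rw [X1mat, triMatC_const] at hXv
    obtain ⟨φ, hφ, heq⟩ := exists_mem_singularRatios_of_mulVec_eq_zero hv hXv
    have heq' : cc2 δv ^ 2 = 4 * φ * (cc1 δv δz * cc3 δv δz) := by
      exact_mod_cast heq.trans (mul_assoc _ _ _)
    exact (four_mul_mul_cc1_cc3_lt_cc2_sq hδv.ne' (singularRatios_subset_Icc N hφ)).ne' heq'
  refine ⟨hdet, fun lam ⟨v, hv, hWv⟩ => ?_⟩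
  have hker := Matrix.mulVec_sub_smul_eq_zero_of_nonsing_inv_mul hdet hWv
  rw [Y1mat, X1mat, triMatC_const, triMatC_const, tridiagToeplitz_sub_smul] at hker
  exact exists_mem_singularRatios_of_mulVec_eq_zero hv hker

/-- `X₁` is invertible and, for every eigenvalue `λ` of `W₁ = X₁⁻¹ Y₁`, there is `φ`
with `φ = 1` or `φ = cos²(kπ/N)` for some `k ∈ {1, …, N-1}` such that
`(y₂ - λc₂)² = 4 φ (y₁ - λc₁)(y₃ - λc₃)`. -/
theorem stmt8 (c δv δz : ℝ) (hc : 0 < c) (hδv : 0 < δv) (hδz0 : 0 < δz)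
    (hδz2 : δz < 2) (N : ℕ) (hN : 2 ≤ N) :
    IsUnit (X1mat δv δz N).det ∧
    ∀ lam : ℂ, IsEig ((X1mat δv δz N)⁻¹ * Y1mat c δz N) lam →
      ∃ φ : ℝ,
        (φ = 1 ∨ ∃ k, 1 ≤ k ∧ k ≤ N - 1 ∧ φ = Real.cos (k * Real.pi / N) ^ 2) ∧
        ((yy2 c δz : ℂ) - lam * (cc2 δv : ℂ)) ^ 2 =
          4 * (φ : ℂ) * ((yy1 c δz : ℂ) - lam * (cc1 δv δz : ℂ)) *
            ((yy3 c δz : ℂ) - lam * (cc3 δv δz : ℂ)) :=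
  stmt8_general c δv δz hδv N
end

section
/- For every φ ∈ [0,1] the following hold: c₂² − 4c₁c₃φ > 0, y₂² − 4y₁y₃φ > 0, and 2c₂y₂ − 4c₁y₃φ − 4c₃y₁φ > 0; consequently, every complex root λ of the quadratic equation (c₂² − 4c₁c₃φ)·λ² − (2c₂y₂ − 4c₁y₃φ − 4c₃y₁φ)·λ + (y₂² − 4y₁y₃φ) = 0 satisfies Re λ > 0. -/
lemma quad_root_re_pos {A B C : ℝ} (hA : 0 < A) (hB : 0 < B) (hC : 0 < C)
    (lam : ℂ) (h : (A : ℂ) * lam ^ 2 - (B : ℂ) * lam + (C : ℂ) = 0) : 0 < lam.re := by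
  have hre : A * (lam.re * lam.re - lam.im * lam.im) - B * lam.re + C = 0 := by
    have := congrArg Complex.re h
    simp [pow_two, Complex.mul_re, Complex.mul_im] at this
    linarith [this]
  have him : lam.im * (2 * A * lam.re - B) = 0 := by
    have := congrArg Complex.im h
    simp [pow_two, Complex.mul_re, Complex.mul_im] at this
    nlinarith [this]
  rcases mul_eq_zero.1 him with h0 | h0
  · rw [h0] at hre
    by_contra hx
    push_neg at hx
    nlinarith [mul_nonneg (mul_nonneg hA.le (neg_nonneg.2 hx)) (neg_nonneg.2 hx)]
  · have : lam.re = B / (2 * A) := by field_simp; linarith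
    rw [this]
    positivity

/-- For every `φ ∈ [0,1]`: `c₂² - 4c₁c₃φ > 0`, `y₂² - 4y₁y₃φ > 0` and
`2c₂y₂ - 4c₁y₃φ - 4c₃y₁φ > 0`; consequently every complex root `λ` of
`(c₂² - 4c₁c₃φ) λ² - (2c₂y₂ - 4c₁y₃φ - 4c₃y₁φ) λ + (y₂² - 4y₁y₃φ) = 0`
satisfies `Re λ > 0`. -/
theorem stmt9 (c δv δz : ℝ) (hc : 0 < c) (hδv : 0 < δv) (hδz : 0 < δz) :
    ∀ φ : ℝ, φ ∈ Set.Icc (0 : ℝ) 1 →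
      (0 < cc2 δv ^ 2 - 4 * cc1 δv δz * cc3 δv δz * φ ∧
        0 < yy2 c δz ^ 2 - 4 * yy1 c δz * yy3 c δz * φ ∧
        0 < 2 * cc2 δv * yy2 c δz - 4 * cc1 δv δz * yy3 c δz * φ -
          4 * cc3 δv δz * yy1 c δz * φ) ∧
      ∀ lam : ℂ,
        ((cc2 δv ^ 2 - 4 * cc1 δv δz * cc3 δv δz * φ : ℝ) : ℂ) * lam ^ 2 -
            ((2 * cc2 δv * yy2 c δz - 4 * cc1 δv δz * yy3 c δz * φ -
              4 * cc3 δv δz * yy1 c δz * φ : ℝ) : ℂ) * lam +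
            ((yy2 c δz ^ 2 - 4 * yy1 c δz * yy3 c δz * φ : ℝ) : ℂ) = 0 →
        0 < lam.re := by
  intro φ hφ
  obtain ⟨hφ0, hφ1⟩ := hφ
  have hd2 : (0:ℝ) < δz ^ 2 := by positivity
  have h1 : 0 < cc2 δv ^ 2 - 4 * cc1 δv δz * cc3 δv δz * φ := by
    have e : cc2 δv ^ 2 - 4 * cc1 δv δz * cc3 δv δz * φ
        = (400 - 16 * φ + 4 * φ * δz ^ 2) / (576 * δv ^ 2) := by
      unfold cc1 cc2 cc3; field_simp; ring
    rw [e]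
    apply div_pos _ (by positivity)
    nlinarith [mul_nonneg hφ0 (sq_nonneg δz)]
  have h2 : 0 < yy2 c δz ^ 2 - 4 * yy1 c δz * yy3 c δz * φ := by
    have e : yy2 c δz ^ 2 - 4 * yy1 c δz * yy3 c δz * φ
        = (4 * c ^ 2 * ((12 + δz ^ 2) ^ 2 * (1 - φ) + 36 * δz ^ 2 * φ)) / (144 * δz ^ 4) := by
      unfold yy1 yy2 yy3; field_simp; ring
    rw [e]
    apply div_pos _ (by positivity)
    rcases lt_or_eq_of_le hφ1 with h | h
    · nlinarith [mul_pos (mul_pos (pow_pos hc 2)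
          (pow_pos (show (0:ℝ) < 12 + δz ^ 2 by positivity) 2)) (sub_pos.2 h),
        mul_nonneg (mul_nonneg (sq_nonneg c) hd2.le) hφ0]
    · subst h; nlinarith [mul_pos (pow_pos hc 2) hd2]
  have h3 : 0 < 2 * cc2 δv * yy2 c δz - 4 * cc1 δv δz * yy3 c δz * φ -
      4 * cc3 δv δz * yy1 c δz * φ := by
    have e : 2 * cc2 δv * yy2 c δz - 4 * cc1 δv δz * yy3 c δz * φ -
        4 * cc3 δv δz * yy1 c δz * φ
        = (c * (120 + 24 * φ + 10 * δz ^ 2 - 4 * φ * δz ^ 2)) / (36 * δv * δz ^ 2) := by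
      unfold cc1 cc2 cc3 yy1 yy2 yy3; field_simp; ring
    rw [e]
    apply div_pos _ (by positivity)
    nlinarith [mul_nonneg hφ0 (sq_nonneg δz), mul_nonneg (sub_nonneg.2 hφ1) (sq_nonneg δz)]
  refine ⟨⟨h1, h2, h3⟩, fun lam hl => quad_root_re_pos h1 h3 h2 lam hl⟩
end

section
/- The matrix X₁ is invertible, the matrix I + W̃₁ with W̃₁ = (1/2)X₁⁻¹Y₁ is invertible, and every eigenvalue μ of (I + W̃₁)⁻¹(I − W̃₁) satisfies |μ| < 1; that is, the Crank–Nicolson compact scheme for the constant-coefficient convection–diffusion equation is unconditionally stable. -/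
/-!
For `v ≠ 0` put `P = v*v` and `Z = v*Uv`, where `U` is the shift matrix. Every constant
tridiagonal Toeplitz matrix `T` has `v*Tv = βP + γZ + α Z̄`, and `|Z| ≤ P`, `Re Z < P`, the
strict inequality because `2(P - Re Z) = |v₀|² + ∑ |v_{i+1} - v_i|²`. For `X₁, Y₁` this makes
`Re(v*Y₁v · conj(v*X₁v)) > 0`. If `(I + W̃₁)⁻¹(I - W̃₁)u = μu` then
`(X₁ - Y₁/2)u = μ(X₁ + Y₁/2)u`, so `p - r = μ(p + r)` for `p = u*X₁u`, `r = u*Y₁u/2`, and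
`|p + r|² - |p - r|² = 4 Re(r p̄) > 0` gives `|μ| < 1`. The same positivity shows that
`X₁` and `X₁ + Y₁/2` are nonsingular.
-/

open Finset Matrix Complex ComplexConjugate

def shiftMatrix (R : Type*) [Zero R] [One R] (n : ℕ) : Matrix (Fin n) (Fin n) R :=
  Matrix.of fun i j => if i.val + 1 = j.val then 1 else 0

noncomputable def extendByZero {R : Type*} [Zero R] {n : ℕ} (v : Fin n → R) : ℕ → R :=
  Function.extend Fin.val v 0

section extendByZero

variable {R : Type*} [Zero R] {n : ℕ} (v : Fin n → R)

@[simp]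
lemma extendByZero_val (i : Fin n) : extendByZero v i = v i :=
  Fin.val_injective.extend_apply v 0 i

lemma extendByZero_of_le {k : ℕ} (hk : n ≤ k) : extendByZero v k = 0 :=
  Function.extend_apply' _ _ _ fun ⟨i, hi⟩ => by omega

lemma sum_fin_eq_sum_range_extendByZero {M : Type*} [AddCommMonoid M] (f : ℕ → R → M) :
    ∑ i : Fin n, f i (v i) = ∑ i ∈ range n, f i (extendByZero v i) := by
  simp [← Fin.sum_univ_eq_sum_range]

end extendByZero

lemma shiftMatrix_mulVec {R : Type*} [NonAssocSemiring R] {n : ℕ} (v : Fin n → R) (i : Fin n) :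
    (shiftMatrix R n *ᵥ v) i = extendByZero v (i + 1) := by
  simp only [mulVec, dotProduct, shiftMatrix, of_apply, ite_mul, one_mul, zero_mul]
  rw [sum_fin_eq_sum_range_extendByZero v fun k x => if i.val + 1 = k then x else 0,
    sum_ite_eq, ite_eq_left_iff]
  exact fun h => (extendByZero_of_le v (by simpa using h)).symm

section sequences

variable (w : ℕ → ℂ) {n : ℕ}

lemma sum_range_normSq_succ (hw : w n = 0) :
    ∑ i ∈ range n, normSq (w (i + 1)) = ∑ i ∈ range n, normSq (w i) - normSq (w 0) := by
  have h := sum_range_succ' (fun i => normSq (w i)) n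
  rw [sum_range_succ, hw, map_zero, add_zero] at h
  linarith

lemma norm_sum_conj_mul_succ_le (hw : w n = 0) :
    ‖∑ i ∈ range n, conj (w i) * w (i + 1)‖ ≤ ∑ i ∈ range n, normSq (w i) := by
  calc ‖∑ i ∈ range n, conj (w i) * w (i + 1)‖
      ≤ ∑ i ∈ range n, ‖conj (w i) * w (i + 1)‖ := norm_sum_le _ _
    _ = ∑ i ∈ range n, ‖w i‖ * ‖w (i + 1)‖ := by simp only [norm_mul, norm_conj]
    _ ≤ ∑ i ∈ range n, (normSq (w i) + normSq (w (i + 1))) / 2 := by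
        gcongr with i
        rw [← Complex.sq_norm, ← Complex.sq_norm]
        nlinarith [sq_nonneg (‖w i‖ - ‖w (i + 1)‖)]
    _ ≤ ∑ i ∈ range n, normSq (w i) := by
        rw [← sum_div, sum_add_distrib, sum_range_normSq_succ w hw]
        linarith [normSq_nonneg (w 0)]

lemma sum_range_normSq_sub_succ (hw : w n = 0) :
    ∑ i ∈ range n, normSq (w (i + 1) - w i) + normSq (w 0)
      = 2 * (∑ i ∈ range n, normSq (w i) - (∑ i ∈ range n, conj (w i) * w (i + 1)).re) := by
  simp only [normSq_sub, sum_sub_distrib, sum_add_distrib, sum_range_normSq_succ w hw, re_sum,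
    ← mul_sum, mul_comm (w _)]
  ring

lemma re_sum_conj_mul_succ_lt (hw : w n = 0) {k : ℕ} (hk : k < n) (hwk : w k ≠ 0) :
    (∑ i ∈ range n, conj (w i) * w (i + 1)).re < ∑ i ∈ range n, normSq (w i) := by
  by_contra! hle
  have hsum : ∑ i ∈ range n, normSq (w (i + 1) - w i) + normSq (w 0) ≤ 0 := by
    rw [sum_range_normSq_sub_succ w hw]; linarith
  have hdiffs_nonneg : 0 ≤ ∑ i ∈ range n, normSq (w (i + 1) - w i) :=
    sum_nonneg fun i _ => normSq_nonneg _
  have hw0 : w 0 = 0 := normSq_eq_zero.1 (by linarith [normSq_nonneg (w 0)])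
  have hsteps := (sum_eq_zero_iff_of_nonneg fun i _ => normSq_nonneg (w (i + 1) - w i)).1
    (by linarith [normSq_nonneg (w 0)])
  have hzero : ∀ j ≤ n, w j = 0 := by
    intro j hj
    induction j with
    | zero => exact hw0
    | succ j ih =>
      have := normSq_eq_zero.1 (hsteps j (mem_range.2 hj))
      rwa [ih (by omega), sub_zero] at this
  exact hwk (hzero k hk.le)

end sequences

section quadraticForms

variable {n : ℕ} (v : Fin n → ℂ)

lemma star_dotProduct_self_eq :
    star v ⬝ᵥ v = ((∑ i ∈ range n, normSq (extendByZero v i) : ℝ) : ℂ) := by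
  push_cast
  rw [dotProduct, ← sum_fin_eq_sum_range_extendByZero v fun _ x => (normSq x : ℂ)]
  simp [mul_comm, mul_conj]

lemma star_dotProduct_shiftMatrix_mulVec :
    star v ⬝ᵥ shiftMatrix ℂ n *ᵥ v
      = ∑ i ∈ range n, conj (extendByZero v i) * extendByZero v (i + 1) := by
  simp only [dotProduct, shiftMatrix_mulVec]
  exact sum_fin_eq_sum_range_extendByZero v fun k x => star x * extendByZero v (k + 1)

lemma norm_star_dotProduct_shiftMatrix_mulVec_le :
    ‖star v ⬝ᵥ shiftMatrix ℂ n *ᵥ v‖ ≤ (star v ⬝ᵥ v).re := by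
  rw [star_dotProduct_self_eq, ofReal_re, star_dotProduct_shiftMatrix_mulVec]
  exact norm_sum_conj_mul_succ_le _ (extendByZero_of_le v le_rfl)

lemma re_star_dotProduct_shiftMatrix_mulVec_lt (hv : v ≠ 0) :
    (star v ⬝ᵥ shiftMatrix ℂ n *ᵥ v).re < (star v ⬝ᵥ v).re := by
  obtain ⟨k, hk⟩ := Function.ne_iff.1 hv
  rw [star_dotProduct_self_eq, ofReal_re, star_dotProduct_shiftMatrix_mulVec]
  exact re_sum_conj_mul_succ_lt _ (extendByZero_of_le v le_rfl) k.isLt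
    (by rwa [extendByZero_val])

lemma star_dotProduct_conjTranspose_mulVec (M : Matrix (Fin n) (Fin n) ℂ) :
    star v ⬝ᵥ Mᴴ *ᵥ v = conj (star v ⬝ᵥ M *ᵥ v) := by
  rw [star_dotProduct, star_mulVec, conjTranspose_conjTranspose, ← dotProduct_mulVec, star_def]

lemma conjTranspose_shiftMatrix : (shiftMatrix ℂ n)ᴴ = (shiftMatrix ℂ n)ᵀ := by
  ext i j
  simp [shiftMatrix]

lemma triMatC_const_s12 (α β γ : ℝ) :
    triMatC n (fun _ => α) (fun _ => β) (fun _ => γ)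
      = (β : ℂ) • 1 + (γ : ℂ) • shiftMatrix ℂ n + (α : ℂ) • (shiftMatrix ℂ n)ᵀ := by
  ext i j
  simp only [triMatC, shiftMatrix, of_apply, Matrix.add_apply, Matrix.smul_apply, one_apply,
    transpose_apply, smul_eq_mul, Fin.ext_iff]
  split_ifs <;> first | (exfalso; omega) | ring

lemma star_dotProduct_triMatC_const_mulVec (α β γ : ℝ) :
    star v ⬝ᵥ triMatC n (fun _ => α) (fun _ => β) (fun _ => γ) *ᵥ v
      = β * (star v ⬝ᵥ v).re + γ * (star v ⬝ᵥ shiftMatrix ℂ n *ᵥ v)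
        + α * conj (star v ⬝ᵥ shiftMatrix ℂ n *ᵥ v) := by
  rw [triMatC_const_s12, ← conjTranspose_shiftMatrix, ← star_dotProduct_conjTranspose_mulVec,
    star_dotProduct_self_eq, ofReal_re, ← star_dotProduct_self_eq]
  simp only [add_mulVec, smul_mulVec, one_mulVec, dotProduct_add, dotProduct_smul, smul_eq_mul]

end quadraticForms

section cayley

lemma ne_zero_of_re_mul_conj_pos {p r : ℂ} (h : 0 < (r * conj p).re) : p ≠ 0 := by
  rintro rfl
  simp at h

lemma add_ne_zero_of_re_mul_conj_pos {p r : ℂ} (h : 0 < (r * conj p).re) : p + r ≠ 0 := by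
  intro hpr
  rw [eq_neg_of_add_eq_zero_right hpr, neg_mul, mul_conj, neg_re, ofReal_re] at h
  linarith [normSq_nonneg p]

lemma norm_lt_one_of_sub_eq_mul_add {p r μ : ℂ} (h : 0 < (r * conj p).re)
    (hμ : p - r = μ * (p + r)) : ‖μ‖ < 1 := by
  have hlt : normSq (p - r) < normSq (p + r) := by
    have hsymm : (p * conj r).re = (r * conj p).re := by
      rw [← conj_re, map_mul, conj_conj, mul_comm]
    rw [normSq_sub, normSq_add, hsymm]
    linarith
  rw [hμ, normSq_mul, ← Complex.sq_norm] at hlt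
  have hμ2 := (mul_lt_iff_lt_one_left (normSq_pos.2 (add_ne_zero_of_re_mul_conj_pos h))).1 hlt
  exact (sq_lt_one_iff₀ (norm_nonneg μ)).1 hμ2

variable {n : ℕ}

lemma isUnit_det_of_star_dotProduct_mulVec_ne_zero {A : Matrix (Fin n) (Fin n) ℂ}
    (h : ∀ v, v ≠ 0 → star v ⬝ᵥ A *ᵥ v ≠ 0) : IsUnit A.det := by
  refine isUnit_iff_ne_zero.2 fun hdet => ?_
  obtain ⟨v, hv, hAv⟩ := exists_mulVec_eq_zero_iff.2 hdet
  exact h v hv (by rw [hAv, dotProduct_zero])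

variable {X Y : Matrix (Fin n) (Fin n) ℂ}
  (hXY : ∀ v, v ≠ 0 → 0 < (star v ⬝ᵥ Y *ᵥ v * conj (star v ⬝ᵥ X *ᵥ v)).re)
include hXY

lemma isUnit_det_of_re_mul_conj_pos : IsUnit X.det :=
  isUnit_det_of_star_dotProduct_mulVec_ne_zero fun v hv =>
    ne_zero_of_re_mul_conj_pos (hXY v hv)

lemma isUnit_det_one_add_inv_mul_of_re_mul_conj_pos : IsUnit (1 + X⁻¹ * Y).det := by
  have hX := isUnit_det_of_re_mul_conj_pos hXY
  have hXY_add : IsUnit (X + Y).det := isUnit_det_of_star_dotProduct_mulVec_ne_zero fun v hv => by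
    rw [add_mulVec, dotProduct_add]
    exact add_ne_zero_of_re_mul_conj_pos (hXY v hv)
  rw [← nonsing_inv_mul X hX, ← Matrix.mul_add, det_mul]
  exact ((isUnit_nonsing_inv_det X hX).mul hXY_add)

lemma norm_lt_one_of_isEig_cayley {μ : ℂ}
    (hμ : IsEig ((1 + X⁻¹ * Y)⁻¹ * (1 - X⁻¹ * Y)) μ) : ‖μ‖ < 1 := by
  obtain ⟨u, hu, hμu⟩ := hμ
  have hX : X * X⁻¹ = 1 := mul_nonsing_inv X (isUnit_det_of_re_mul_conj_pos hXY)
  have hB : (1 + X⁻¹ * Y) * (1 + X⁻¹ * Y)⁻¹ = 1 :=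
    mul_nonsing_inv _ (isUnit_det_one_add_inv_mul_of_re_mul_conj_pos hXY)
  have hXW : X * (X⁻¹ * Y) = Y := by rw [← Matrix.mul_assoc, hX, Matrix.one_mul]
  have hsub : X * (1 - X⁻¹ * Y) = X - Y := by rw [Matrix.mul_sub, Matrix.mul_one, hXW]
  have hadd : X * (1 + X⁻¹ * Y) = X + Y := by rw [Matrix.mul_add, Matrix.mul_one, hXW]
  have hcayley : (1 - X⁻¹ * Y) *ᵥ u = μ • (1 + X⁻¹ * Y) *ᵥ u := by
    rw [← mulVec_smul, ← hμu, mulVec_mulVec, ← Matrix.mul_assoc, hB, Matrix.one_mul]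
  have hpencil : (X - Y) *ᵥ u = μ • (X + Y) *ᵥ u := by
    rw [← hsub, ← hadd, ← mulVec_mulVec, hcayley, mulVec_smul, mulVec_mulVec]
  apply norm_lt_one_of_sub_eq_mul_add (hXY u hu)
  simpa only [sub_mulVec, add_mulVec, dotProduct_sub, dotProduct_add, dotProduct_smul,
    smul_eq_mul] using congrArg (star u ⬝ᵥ ·) hpencil

end cayley

/-- With `Z = x + iy` the real part equals `(4K(P - x)(5P + x) - c y²) / (12 δv)`,
where `K = (c + c δz²/12)/δz²`, and `c < 4K` exactly when `δz² < 6`. -/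
lemma re_Y1form_mul_conj_X1form_pos {c δv δz : ℝ} (hc : 0 < c) (hδv : 0 < δv) (hδz : δz ≠ 0)
    (hδz6 : δz ^ 2 < 6) {P : ℝ} {Z : ℂ} (hZ : ‖Z‖ ≤ P) (hZre : Z.re < P) :
    0 < ((yy2 c δz * P + yy3 c δz * Z + yy1 c δz * conj Z)
      * conj (cc2 δv * P + cc3 δv δz * Z + cc1 δv δz * conj Z)).re := by
  set K := (c + c * δz ^ 2 / 12) / δz ^ 2 with hK
  have hre : ((yy2 c δz * P + yy3 c δz * Z + yy1 c δz * conj Z)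
      * conj (cc2 δv * P + cc3 δv δz * Z + cc1 δv δz * conj Z)).re
        = (4 * K * ((P - Z.re) * (5 * P + Z.re)) - c * Z.im ^ 2) / (12 * δv) := by
    simp only [mul_re, mul_im, add_re, add_im, conj_re, conj_im, ofReal_re, ofReal_im,
      map_add, map_mul, conj_ofReal, cc1, cc2, cc3, yy1, yy2, yy3, hK]
    field_simp
    ring
  have hc4K : c < 4 * K := by
    rw [hK, mul_div_assoc', lt_div_iff₀ (by positivity)]
    nlinarith
  have hnormSq : Z.re ^ 2 + Z.im ^ 2 ≤ P ^ 2 := by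
    rw [sq, sq, ← normSq_apply, ← Complex.sq_norm]
    exact pow_le_pow_left₀ (norm_nonneg _) hZ 2
  have hP : -P ≤ Z.re := by nlinarith [sq_nonneg Z.im, sq_nonneg (Z.re + P)]
  rw [hre]
  refine div_pos (sub_pos.2 ?_) (by positivity)
  have hpos : 0 < (P - Z.re) * (5 * P + Z.re) := mul_pos (by linarith) (by linarith)
  calc c * Z.im ^ 2 ≤ c * ((P - Z.re) * (5 * P + Z.re)) := by
        gcongr
        nlinarith
    _ < 4 * K * ((P - Z.re) * (5 * P + Z.re)) := by gcongr

lemma re_Y1mat_mul_conj_X1mat_pos {c δv δz : ℝ} (hc : 0 < c) (hδv : 0 < δv) (hδz : δz ≠ 0)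
    (hδz6 : δz ^ 2 < 6) {N : ℕ} {v : Fin (N - 1) → ℂ} (hv : v ≠ 0) :
    0 < (star v ⬝ᵥ Y1mat c δz N *ᵥ v * conj (star v ⬝ᵥ X1mat δv δz N *ᵥ v)).re := by
  rw [X1mat, Y1mat, star_dotProduct_triMatC_const_mulVec, star_dotProduct_triMatC_const_mulVec]
  exact re_Y1form_mul_conj_X1form_pos hc hδv hδz hδz6 (norm_star_dotProduct_shiftMatrix_mulVec_le v)
    (re_star_dotProduct_shiftMatrix_mulVec_lt v hv)

theorem stmt12_general (c δv δz : ℝ) (hc : 0 < c) (hδv : 0 < δv) (hδz0 : 0 < δz)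
    (hδz2 : δz < 2) (N : ℕ) :
    IsUnit (X1mat δv δz N).det ∧
    IsUnit (1 + (1 / 2 : ℂ) • ((X1mat δv δz N)⁻¹ * Y1mat c δz N)).det ∧
    ∀ μ : ℂ,
      IsEig ((1 + (1 / 2 : ℂ) • ((X1mat δv δz N)⁻¹ * Y1mat c δz N))⁻¹ *
        (1 - (1 / 2 : ℂ) • ((X1mat δv δz N)⁻¹ * Y1mat c δz N))) μ →
      ‖μ‖ < 1 := by
  have hXY : ∀ v, v ≠ 0 → 0 < (star v ⬝ᵥ ((1 / 2 : ℂ) • Y1mat c δz N) *ᵥ v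
      * conj (star v ⬝ᵥ X1mat δv δz N *ᵥ v)).re := fun v hv => by
    rw [smul_mulVec, dotProduct_smul, smul_eq_mul, mul_assoc]
    simpa [mul_re] using half_pos (re_Y1mat_mul_conj_X1mat_pos hc hδv hδz0.ne' (by nlinarith) hv)
  rw [← Matrix.mul_smul]
  exact ⟨isUnit_det_of_re_mul_conj_pos hXY, isUnit_det_one_add_inv_mul_of_re_mul_conj_pos hXY,
    fun μ => norm_lt_one_of_isEig_cayley hXY⟩

/-- `X₁` is invertible, `I + W̃₁` (with `W̃₁ = (1/2) X₁⁻¹ Y₁`) is invertible, and every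
eigenvalue `μ` of `(I + W̃₁)⁻¹ (I - W̃₁)` satisfies `|μ| < 1`: the Crank–Nicolson
compact scheme for the constant-coefficient convection–diffusion equation is
unconditionally stable. -/
theorem stmt12 (c δv δz : ℝ) (hc : 0 < c) (hδv : 0 < δv) (hδz0 : 0 < δz)
    (hδz2 : δz < 2) (N : ℕ) (hN : 2 ≤ N) :
    IsUnit (X1mat δv δz N).det ∧
    IsUnit (1 + (1 / 2 : ℂ) • ((X1mat δv δz N)⁻¹ * Y1mat c δz N)).det ∧
    ∀ μ : ℂ,
      IsEig ((1 + (1 / 2 : ℂ) • ((X1mat δv δz N)⁻¹ * Y1mat c δz N))⁻¹ *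
        (1 - (1 / 2 : ℂ) • ((X1mat δv δz N)⁻¹ * Y1mat c δz N))) μ →
      ‖μ‖ < 1 :=
  stmt12_general c δv δz hc hδv hδz0 hδz2 N
end

section
/- Let N ≥ 2 and let p_i, q_i, r_i (i = 1,…,N−1) be nonnegative real numbers with the conventions p_1 = r_{N−1} = 0 and p_j = q_j = r_j = 0 for every index j outside {1,…,N−1}. Let X be the (N−1)×(N−1) tridiagonal matrix with X_{i,i} = q_i, X_{i,i+1} = r_i, X_{i+1,i} = p_{i+1} and all other entries zero. For l = 1,…,N−1 set g_l = p_l² + q_l² + r_l² and s_l = p_l(q_{l−1} + r_{l−2}) + q_l(p_{l+1} + r_{l−1}) + r_l(p_{l+2} + q_{l+1}). If δ := min_{1 ≤ l ≤ N−1}(g_l − s_l) > 0, then X is invertible and ‖X⁻¹‖₂ ≤ δ^{−1/2}. -/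
/-! The Gram matrix `X Xᵀ` has diagonal entries `g_l` and nonnegative off-diagonal row sums
`s_l`, so a Gerschgorin-type estimate gives `‖Xᵀ w‖² ≥ δ ‖w‖²`. Concretely, each coordinate of
`Xᵀ w` has the form `a x + b y + c z` with `a, b, c ≥ 0`; bounding its cross terms by
`2xy ≥ -(x² + y²)` and collecting the coefficient of each `w_l²` leaves exactly `g_l - s_l`.
Hence `Xᵀ` is injective with `‖(Xᵀ)⁻¹‖₂ ≤ δ^{-1/2}`, and `‖X⁻¹‖₂ = ‖(Xᵀ)⁻¹‖₂`. -/

/-- The `n×n` real tridiagonal matrix with 1-indexed subdiagonal entries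
`sub_{i+1}` (at position `(i+1, i)`), diagonal entries `dia_i` and superdiagonal
entries `sup_i` (at position `(i, i+1)`). -/
def triMatR (n : ℕ) (sub dia sup : ℕ → ℝ) : Matrix (Fin n) (Fin n) ℝ :=
  Matrix.of fun i j =>
    if i.val = j.val then dia (i.val + 1)
    else if i.val + 1 = j.val then sup (i.val + 1)
    else if j.val + 1 = i.val then sub (i.val + 1)
    else 0

noncomputable def opNorm2 {n : ℕ} (M : Matrix (Fin n) (Fin n) ℝ) : ℝ :=
  ‖LinearMap.toContinuousLinearMap (Matrix.toEuclideanLin M)‖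

open Finset Matrix

theorem le_sq_mul_add_mul_add_mul {a b c : ℝ} (ha : 0 ≤ a) (hb : 0 ≤ b) (hc : 0 ≤ c)
    (x y z : ℝ) :
    a * (a - b - c) * x ^ 2 + b * (b - a - c) * y ^ 2 + c * (c - a - b) * z ^ 2 ≤
      (a * x + b * y + c * z) ^ 2 := by
  nlinarith [mul_nonneg (mul_nonneg ha hb) (sq_nonneg (x + y)),
    mul_nonneg (mul_nonneg ha hc) (sq_nonneg (x + z)),
    mul_nonneg (mul_nonneg hb hc) (sq_nonneg (y + z))]

theorem sum_range_succ_eq_sum_range_of_eq {M : Type*} [AddCancelCommMonoid M]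
    (G : ℕ → M) {n : ℕ} (h : G 0 = G n) :
    ∑ i ∈ range n, G (i + 1) = ∑ i ∈ range n, G i := by
  have := (sum_range_succ' G n).symm.trans (sum_range_succ G n)
  rw [h] at this
  exact add_right_cancel this

def gershgorinGap (p q r : ℕ → ℝ) (l : ℕ) : ℝ :=
  (p l ^ 2 + q l ^ 2 + r l ^ 2) -
    (p l * (q (l - 1) + r (l - 2)) + q l * (p (l + 1) + r (l - 1)) +
      r l * (p (l + 2) + q (l + 1)))

-- `w` is 0-indexed: `w i` is the coordinate with index `i + 1` in the paper's numbering.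
theorem sum_gershgorinGap_mul_sq_le {p q r : ℕ → ℝ}
    (hp : ∀ j, 0 ≤ p j) (hq : ∀ j, 0 ≤ q j) (hr : ∀ j, 0 ≤ r j)
    {n : ℕ} (hp1 : p 1 = 0) (hr0 : r 0 = 0) (hrn : r n = 0) {w : ℕ → ℝ} (hwn : w n = 0) :
    ∑ i ∈ range n, gershgorinGap p q r (i + 1) * w i ^ 2 ≤
      ∑ i ∈ range n, (r i * w (i - 1) + q (i + 1) * w i + p (i + 2) * w (i + 1)) ^ 2 := by
  have hr_shift := sum_range_succ_eq_sum_range_of_eq (n := n)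
    (fun i => r i * (r i - q (i + 1) - p (i + 2)) * w (i - 1) ^ 2) (by simp [hr0, hrn])
  have hp_shift := sum_range_succ_eq_sum_range_of_eq (n := n)
    (fun i => p (i + 1) * (p (i + 1) - r (i - 1) - q i) * w i ^ 2) (by simp [hp1, hwn])
  simp only [Nat.add_sub_cancel] at hr_shift hp_shift
  calc ∑ i ∈ range n, gershgorinGap p q r (i + 1) * w i ^ 2
      = ∑ i ∈ range n, (r (i + 1) * (r (i + 1) - q (i + 2) - p (i + 3)) * w i ^ 2 +
          q (i + 1) * (q (i + 1) - r i - p (i + 2)) * w i ^ 2 +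
          p (i + 1) * (p (i + 1) - r (i - 1) - q i) * w i ^ 2) := by
        refine sum_congr rfl fun i _ => ?_
        rw [gershgorinGap, Nat.add_sub_cancel, show i + 1 - 2 = i - 1 by omega]
        ring
    _ = ∑ i ∈ range n, (r i * (r i - q (i + 1) - p (i + 2)) * w (i - 1) ^ 2 +
          q (i + 1) * (q (i + 1) - r i - p (i + 2)) * w i ^ 2 +
          p (i + 2) * (p (i + 2) - r i - q (i + 1)) * w (i + 1) ^ 2) := by
        simp only [sum_add_distrib, hr_shift, hp_shift]
    _ ≤ _ := sum_le_sum fun i _ => le_sq_mul_add_mul_add_mul (hr i) (hq _) (hp _) _ _ _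

section ZeroExtend

variable {α : Type*} {n : ℕ}

def zeroExtend [Zero α] (v : Fin n → α) (j : ℕ) : α :=
  if h : j < n then v ⟨j, h⟩ else 0

theorem zeroExtend_of_le [Zero α] (v : Fin n → α) {j : ℕ} (hj : n ≤ j) : zeroExtend v j = 0 :=
  dif_neg (by omega)

theorem sum_fin_eq_sum_range_zeroExtend {M : Type*} [AddCommMonoid M] [Zero α]
    (f : ℕ → α → M) (v : Fin n → α) :
    ∑ j : Fin n, f j (v j) = ∑ j ∈ range n, f j (zeroExtend v j) := by
  rw [← Fin.sum_univ_eq_sum_range (fun j => f j (zeroExtend v j))]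
  simp [zeroExtend]

theorem sum_range_ite_eq_mul_zeroExtend [NonUnitalNonAssocSemiring α]
    (v : Fin n → α) (k : ℕ) (c : α) :
    ∑ j ∈ range n, (if j = k then c * zeroExtend v j else 0) = c * zeroExtend v k := by
  rw [sum_ite_eq']
  split_ifs with hk
  · rfl
  · rw [zeroExtend_of_le v (not_lt.mp (mt mem_range.mpr hk)), mul_zero]

theorem norm_sq_eq_sum_range_zeroExtend (x : EuclideanSpace ℝ (Fin n)) :
    ‖x‖ ^ 2 = ∑ i ∈ range n, zeroExtend x i ^ 2 := by
  rw [EuclideanSpace.norm_sq_eq]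
  simp only [Real.norm_eq_abs, sq_abs]
  exact sum_fin_eq_sum_range_zeroExtend (fun _ x => x ^ 2) x

end ZeroExtend

theorem triMatR_transpose_mulVec_apply {n : ℕ} {p q r : ℕ → ℝ} (hr0 : r 0 = 0)
    (v : Fin n → ℝ) (i : Fin n) :
    ((triMatR n p q r)ᵀ *ᵥ v) i = r i * zeroExtend v (i - 1) + q (i + 1) * zeroExtend v i +
      p (i + 2) * zeroExtend v (i + 1) := by
  -- For `i = 0` the first and second summands both sit at `j = 0`; `r 0 = 0` kills the first.
  have hsplit : ∀ j : ℕ, ∀ x : ℝ,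
      (if j = i then q (j + 1) else if j + 1 = i then r (j + 1)
        else if (i : ℕ) + 1 = j then p (j + 1) else 0) * x =
      (if j = i - 1 then r i * x else 0) + (if j = i then q (i + 1) * x else 0) +
        (if j = i + 1 then p (i + 2) * x else 0) := by
    intro j x
    split_ifs <;> first
      | omega
      | ring1
      | (rw [show j + 1 = (i : ℕ) by omega]; ring1)
      | (rw [show j + 1 = (i : ℕ) + 2 by omega]; ring1)
      | (obtain rfl : j = (i : ℕ) := by omega
         first | ring1 | (rw [show (i : ℕ) = 0 by omega, hr0]; ring1))
  simp only [mulVec, dotProduct, transpose_apply, triMatR, of_apply]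
  rw [sum_fin_eq_sum_range_zeroExtend (fun j x => (if j = i then q (j + 1)
    else if j + 1 = i then r (j + 1) else if (i : ℕ) + 1 = j then p (j + 1) else 0) * x)]
  simp only [hsplit, sum_add_distrib, sum_range_ite_eq_mul_zeroExtend]

theorem sqrt_mul_norm_le_norm_triMatR_transpose {n : ℕ} {p q r : ℕ → ℝ}
    (hp : ∀ j, 0 ≤ p j) (hq : ∀ j, 0 ≤ q j) (hr : ∀ j, 0 ≤ r j)
    (hp1 : p 1 = 0) (hr0 : r 0 = 0) (hrn : r n = 0) {δ : ℝ}
    (hδ : ∀ i < n, δ ≤ gershgorinGap p q r (i + 1)) (v : EuclideanSpace ℝ (Fin n)) :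
    Real.sqrt δ * ‖v‖ ≤ ‖toEuclideanLin (triMatR n p q r)ᵀ v‖ := by
  have hXv : ∀ i ∈ range n, zeroExtend (toEuclideanLin (triMatR n p q r)ᵀ v) i ^ 2 =
      (r i * zeroExtend v (i - 1) + q (i + 1) * zeroExtend v i +
        p (i + 2) * zeroExtend v (i + 1)) ^ 2 := fun i hi => by
    rw [zeroExtend, dif_pos (mem_range.mp hi)]
    exact congrArg (· ^ 2) (triMatR_transpose_mulVec_apply hr0 v ⟨i, mem_range.mp hi⟩)
  have hsq : δ * ‖v‖ ^ 2 ≤ ‖toEuclideanLin (triMatR n p q r)ᵀ v‖ ^ 2 := by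
    rw [norm_sq_eq_sum_range_zeroExtend, norm_sq_eq_sum_range_zeroExtend, sum_congr rfl hXv,
      mul_sum]
    refine (sum_le_sum fun i hi => ?_).trans
      (sum_gershgorinGap_mul_sq_le hp hq hr hp1 hr0 hrn (zeroExtend_of_le v le_rfl))
    exact mul_le_mul_of_nonneg_right (hδ i (mem_range.mp hi)) (sq_nonneg _)
  have := Real.sqrt_le_sqrt hsq
  rwa [Real.sqrt_mul' _ (sq_nonneg _), Real.sqrt_sq (norm_nonneg _),
    Real.sqrt_sq (norm_nonneg _)] at this

section LowerBound

variable {n : ℕ} {A : Matrix (Fin n) (Fin n) ℝ} {c : ℝ}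

theorem isUnit_det_of_mul_norm_le (hc : 0 < c) (hA : ∀ v, c * ‖v‖ ≤ ‖toEuclideanLin A v‖) :
    IsUnit A.det := by
  refine isUnit_iff_ne_zero.mpr fun hdet => ?_
  obtain ⟨v, hv, hAv⟩ := exists_mulVec_eq_zero_iff.mpr hdet
  have hle := hA (WithLp.toLp 2 v)
  simp only [toLpLin_toLp, toLin'_apply, hAv, WithLp.toLp_zero, norm_zero] at hle
  exact (mul_pos hc (norm_pos_iff.mpr (by simpa using hv))).not_ge hle

theorem opNorm2_inv_le_of_mul_norm_le (hc : 0 < c)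
    (hA : ∀ v, c * ‖v‖ ≤ ‖toEuclideanLin A v‖) : opNorm2 A⁻¹ ≤ c⁻¹ := by
  refine ContinuousLinearMap.opNorm_le_bound _ (inv_nonneg.mpr hc.le) fun u => ?_
  have hAA : A * A⁻¹ = 1 := mul_nonsing_inv A (isUnit_det_of_mul_norm_le hc hA)
  have hu : toEuclideanLin A (toEuclideanLin A⁻¹ u) = u := by
    simp [toLpLin_apply, mulVec_mulVec, hAA]
  rw [le_inv_mul_iff₀ hc]
  conv_rhs => rw [← hu]
  exact hA _

end LowerBound

theorem opNorm2_transpose {n : ℕ} (M : Matrix (Fin n) (Fin n) ℝ) : opNorm2 Mᵀ = opNorm2 M := by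
  have h : ∀ M : Matrix (Fin n) (Fin n) ℝ,
      opNorm2 M = @norm _ Matrix.instL2OpNormedAddCommGroup.toNorm M := fun M => by
    rw [Matrix.l2_opNorm_def, LinearEquiv.trans_apply]
    rfl
  rw [h, h, ← conjTranspose_eq_transpose_of_trivial, l2_opNorm_conjTranspose]

/-- Gerschgorin-type bound: with nonnegative `p_i, q_i, r_i` (satisfying the
conventions `p_1 = r_{N-1} = 0` and `p_j = q_j = r_j = 0` for `j ∉ {1, …, N-1}`),
`g_l = p_l² + q_l² + r_l²` and
`s_l = p_l (q_{l-1} + r_{l-2}) + q_l (p_{l+1} + r_{l-1}) + r_l (p_{l+2} + q_{l+1})`,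
if `δ = min_{1 ≤ l ≤ N-1} (g_l - s_l) > 0` then the tridiagonal matrix `X` is
invertible and `‖X⁻¹‖₂ ≤ δ^{-1/2}`. -/
theorem stmt13 (N : ℕ) (hN : 2 ≤ N) (p q r : ℕ → ℝ)
    (hp : ∀ j, 0 ≤ p j) (hq : ∀ j, 0 ≤ q j) (hr : ∀ j, 0 ≤ r j)
    (hp1 : p 1 = 0) (hrN : r (N - 1) = 0)
    (hout : ∀ j, j = 0 ∨ N ≤ j → p j = 0 ∧ q j = 0 ∧ r j = 0)
    (δ : ℝ)
    (hδdef : δ = (Finset.Icc 1 (N - 1)).inf' (Finset.nonempty_Icc.mpr (by omega))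
      (fun l => (p l ^ 2 + q l ^ 2 + r l ^ 2) -
        (p l * (q (l - 1) + r (l - 2)) + q l * (p (l + 1) + r (l - 1)) +
          r l * (p (l + 2) + q (l + 1)))))
    (hδ : 0 < δ) :
    IsUnit (triMatR (N - 1) p q r).det ∧
    opNorm2 (triMatR (N - 1) p q r)⁻¹ ≤ (Real.sqrt δ)⁻¹ := by
  have hδ_le : ∀ i < N - 1, δ ≤ gershgorinGap p q r (i + 1) := fun i hi =>
    hδdef ▸ inf'_le (gershgorinGap p q r) (mem_Icc.mpr ⟨by omega, by omega⟩)
  have hbound := sqrt_mul_norm_le_norm_triMatR_transpose hp hq hr hp1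
    (hout 0 (Or.inl rfl)).2.2 hrN hδ_le
  have hsqrt : 0 < Real.sqrt δ := Real.sqrt_pos.mpr hδ
  refine ⟨det_transpose (triMatR (N - 1) p q r) ▸ isUnit_det_of_mul_norm_le hsqrt hbound, ?_⟩
  rw [← opNorm2_transpose, transpose_nonsing_inv]
  exact opNorm2_inv_le_of_mul_norm_le hsqrt hbound
end
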